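/- arXiv:1902.06304 — 2 statements merged into one kernel-verified Lean document; each statement's English description precedes it below -/
import Mathlib

section
/- Let a, e, b be real numbers with e ≠ 0 and |b - a| ≤ |e|, set R = sqrt((b-a)^2 + 4e^2) and β = -2e/((b-a) + R). Then |β + e/|e|| ≤ 2|b - a|/|e|. -/
/-- Quantitative form of estimate (beta-h2): if `e ≠ 0`, `|b - a| ≤ |e|`,
`R = sqrt((b-a)² + 4e²)` and `β = -2e/((b-a)+R)`, then
`|β + e/|e|| ≤ 2|b-a|/|e|`. -/
theorem stmt3 (a e b R β : ℝ) (he : e ≠ 0) (hba : |b - a| ≤ |e|)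
    (hR : R = Real.sqrt ((b - a) ^ 2 + 4 * e ^ 2))
    (hβ : β = -2 * e / ((b - a) + R)) :
    abs (β + e / |e|) ≤ 2 * |b - a| / |e| := by
  have habs : 0 < |e| := abs_pos.mpr he
  have hRnn : 0 ≤ R := hR ▸ Real.sqrt_nonneg _
  have hR2 : R ^ 2 = (b - a) ^ 2 + 4 * e ^ 2 := by
    rw [hR]; exact Real.sq_sqrt (by positivity)
  have hRge : 2 * |e| ≤ R := by
    nlinarith [sq_abs e, sq_nonneg (b - a), abs_nonneg e]
  have hd : -(|b - a|) ≤ b - a := neg_abs_le _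
  have hd' : b - a ≤ |b - a| := le_abs_self _
  have hden : 0 < (b - a) + R := by linarith
  have hkey : abs ((b - a) + R - 2 * |e|) ≤ 2 * |b - a| := by
    rw [abs_le]
    constructor
    · nlinarith
    · nlinarith [sq_abs e, sq_abs (b - a), abs_nonneg (b - a)]
  rcases lt_or_gt_of_ne he with hneg | hpos
  · have hae : |e| = -e := abs_of_neg hneg
    have hse : e / |e| = -1 := by rw [hae]; field_simp
    rw [hβ, hse]
    rw [div_add' _ _ _ (ne_of_gt hden), abs_div, abs_of_pos hden, div_le_div_iff₀ hden habs]
    have h1 : |-2 * e + -1 * (b - a + R)| = abs ((b - a) + R - 2 * |e|) := by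
      rw [hae, show (-2 * e + -1 * (b - a + R)) = -((b - a) + R - 2 * (-e)) by ring, abs_neg]
    rw [h1]
    have : |e| ≤ (b - a) + R := by linarith
    nlinarith [abs_nonneg (b - a), hkey]
  · have hae : |e| = e := abs_of_pos hpos
    have hse : e / |e| = 1 := by rw [hae]; field_simp
    rw [hβ, hse]
    rw [div_add' _ _ _ (ne_of_gt hden), abs_div, abs_of_pos hden, div_le_div_iff₀ hden habs]
    have h1 : |-2 * e + 1 * (b - a + R)| = abs ((b - a) + R - 2 * |e|) := by
      rw [hae, show (-2 * e + 1 * (b - a + R)) = (b - a) + R - 2 * e by ring]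
    rw [h1]
    have : |e| ≤ (b - a) + R := by linarith
    nlinarith [abs_nonneg (b - a), hkey]
end

section
/- Let h₀ > 0 and let α₁, α₂, ε : (0, h₀) → ℝ be functions such that: (i) there exist C, c > 0 with |ε(h)| ≤ C e^{-c/h}; (ii) α₁(h) < α₂(h) for all h; (iii) ε(h)/(α₂(h)-α₁(h)) → 0 as h → 0⁺; and (iv) there exist sequences (κ₁,k)_{k≥0} and (κ₂,k)_{k≥0} of real numbers such that for every N and i ∈ {1,2}, α_i(h) = Σ_{k=0}^{N} κ_{i,k} h^k + O(h^{N+1}) as h → 0⁺. Define λ±(h) = ((α₁(h)+α₂(h)) ± sqrt((α₂(h)-α₁(h))² + 4ε(h)²))/2. Then for every N, λ₋(h) = Σ_{k=0}^{N} κ_{1,k} h^k + O(h^{N+1}) and λ₊(h) = Σ_{k=0}^{N} κ_{2,k} h^k + O(h^{N+1}) as h → 0⁺. -/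
open Filter Asymptotics Topology

/-!
Writing `D = α₂ - α₁ > 0`, the eigenvalues are `λ₋ = α₁ - (√(D² + 4ε²) - D)/2` and
`λ₊ = α₂ + (√(D² + 4ε²) - D)/2`, and `0 ≤ √(D² + 4ε²) - D ≤ 2|ε|`. Since `ε` is
exponentially small it is `O(hⁿ)` for every `n`, so the eigenvalues inherit the
expansions of `α₁` and `α₂` unchanged.
-/

theorem Real.abs_sqrt_sq_add_sq_sub_abs_le (a b : ℝ) : |√(a ^ 2 + b ^ 2) - (|a|)| ≤ |b| := by
  have lower : |a| ≤ √(a ^ 2 + b ^ 2) := by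
    rw [← Real.sqrt_sq_eq_abs]
    exact Real.sqrt_le_sqrt (le_add_of_nonneg_right (sq_nonneg b))
  have upper : √(a ^ 2 + b ^ 2) ≤ |a| + |b| := by
    rw [Real.sqrt_le_iff]
    refine ⟨by positivity, ?_⟩
    nlinarith [sq_abs a, sq_abs b, abs_nonneg a, abs_nonneg b]
  rw [abs_sub_le_iff]
  constructor <;> linarith [abs_nonneg b]

theorem Real.exp_neg_div_isLittleO_pow {c : ℝ} (hc : 0 < c) (n : ℕ) :
    (fun h : ℝ => Real.exp (-c / h)) =o[𝓝[>] 0] (· ^ n) := by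
  have hpos : ∀ᶠ h : ℝ in 𝓝[>] 0, 0 < h := self_mem_nhdsWithin
  rw [isLittleO_iff_tendsto' (hpos.mono fun h hh hzero => absurd hzero (pow_pos hh n).ne')]
  have hinv : Tendsto (fun h : ℝ => c / h) (𝓝[>] 0) atTop := by
    simpa only [div_eq_mul_inv] using tendsto_inv_nhdsGT_zero.const_mul_atTop hc
  -- `(c/h)^n e^{-c/h} → 0` is the exponential beating every power of `1/h`
  have := ((Real.tendsto_pow_mul_exp_neg_atTop_nhds_zero n).comp hinv).const_mul (c ^ n)⁻¹
  rw [mul_zero] at this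
  refine this.congr' (hpos.mono fun h hh => ?_)
  simp only [Function.comp, div_pow, neg_div]
  field_simp

theorem isBigO_pow_of_abs_le_exp_neg_div {ε : ℝ → ℝ} {C c : ℝ} (hc : 0 < c)
    (hε : ∀ᶠ h in 𝓝[>] 0, |ε h| ≤ C * Real.exp (-c / h)) (n : ℕ) :
    ε =O[𝓝[>] 0] (· ^ n) := by
  refine IsBigO.trans ?_ (Real.exp_neg_div_isLittleO_pow hc n).isBigO
  refine IsBigO.of_bound C (hε.mono fun h hh => ?_)
  rwa [Real.norm_eq_abs, Real.norm_of_nonneg (Real.exp_pos _).le]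

theorem sqrt_sq_add_four_mul_sq_sub_isBigO {α : Type*} {l : Filter α} {d e : α → ℝ}
    (hd : ∀ᶠ x in l, 0 ≤ d x) :
    (fun x => √(d x ^ 2 + 4 * e x ^ 2) - d x) =O[l] e := by
  refine IsBigO.of_bound 2 (hd.mono fun x hx => ?_)
  have := Real.abs_sqrt_sq_add_sq_sub_abs_le (d x) (2 * e x)
  rw [abs_of_nonneg hx, mul_pow, abs_mul, abs_two] at this
  norm_num at this
  simpa only [Real.norm_eq_abs] using this

theorem stmt10_general (h₀ : ℝ) (hh₀ : 0 < h₀) (α₁ α₂ ε : ℝ → ℝ)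
    (h1 : ∃ C > 0, ∃ c > 0, ∀ h ∈ Set.Ioo 0 h₀, |ε h| ≤ C * Real.exp (-c / h))
    (h2 : ∀ h ∈ Set.Ioo 0 h₀, α₁ h < α₂ h)
    (κ₁ κ₂ : ℕ → ℝ)
    (h4 : ∀ N : ℕ,
      (fun h => α₁ h - ∑ k ∈ Finset.range (N + 1), κ₁ k * h ^ k)
        =O[𝓝[>] (0:ℝ)] (fun h => h ^ (N + 1)))
    (h5 : ∀ N : ℕ,
      (fun h => α₂ h - ∑ k ∈ Finset.range (N + 1), κ₂ k * h ^ k)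
        =O[𝓝[>] (0:ℝ)] (fun h => h ^ (N + 1))) :
    ∀ N : ℕ,
      (fun h => ((α₁ h + α₂ h) - Real.sqrt ((α₂ h - α₁ h) ^ 2 + 4 * ε h ^ 2)) / 2
          - ∑ k ∈ Finset.range (N + 1), κ₁ k * h ^ k)
        =O[𝓝[>] (0:ℝ)] (fun h => h ^ (N + 1)) ∧
      (fun h => ((α₁ h + α₂ h) + Real.sqrt ((α₂ h - α₁ h) ^ 2 + 4 * ε h ^ 2)) / 2
          - ∑ k ∈ Finset.range (N + 1), κ₂ k * h ^ k)
        =O[𝓝[>] (0:ℝ)] (fun h => h ^ (N + 1)) := by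
  intro N
  obtain ⟨C, -, c, hc, hε⟩ := h1
  have hIoo : Set.Ioo (0:ℝ) h₀ ∈ 𝓝[>] (0:ℝ) := Ioo_mem_nhdsGT hh₀
  have hsplit : ∀ᶠ h in 𝓝[>] (0:ℝ), 0 ≤ α₂ h - α₁ h :=
    mem_of_superset hIoo fun h hh => (sub_pos.2 (h2 h hh)).le
  have hgap : (fun h => √((α₂ h - α₁ h) ^ 2 + 4 * ε h ^ 2) - (α₂ h - α₁ h))
      =O[𝓝[>] (0:ℝ)] (fun h => h ^ (N + 1)) :=
    (sqrt_sq_add_four_mul_sq_sub_isBigO hsplit).trans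
      (isBigO_pow_of_abs_le_exp_neg_div hc (mem_of_superset hIoo hε) (N + 1))
  constructor
  · refine ((h4 N).sub (hgap.const_mul_left (1 / 2))).congr_left fun h => ?_
    ring
  · refine ((h5 N).add (hgap.const_mul_left (1 / 2))).congr_left fun h => ?_
    ring

/-- Full asymptotic expansions of the eigenvalues in the case `∂C₁ ∩ ∂C₂ = ∅`:
if `ε` is exponentially small, `α₁ < α₂`, `ε/(α₂-α₁) → 0`, and `α₁, α₂` admit
full asymptotic expansions in `h` with coefficients `κ₁, κ₂`, then the
eigenvalues `λ± = ((α₁+α₂) ± sqrt((α₂-α₁)² + 4ε²))/2` admit the full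
asymptotic expansions with coefficients `κ₁` and `κ₂` respectively. -/
theorem stmt10 (h₀ : ℝ) (hh₀ : 0 < h₀) (α₁ α₂ ε : ℝ → ℝ)
    (h1 : ∃ C > 0, ∃ c > 0, ∀ h ∈ Set.Ioo 0 h₀, |ε h| ≤ C * Real.exp (-c / h))
    (h2 : ∀ h ∈ Set.Ioo 0 h₀, α₁ h < α₂ h)
    (h3 : Tendsto (fun h => ε h / (α₂ h - α₁ h)) (𝓝[>] (0:ℝ)) (𝓝 0))
    (κ₁ κ₂ : ℕ → ℝ)
    (h4 : ∀ N : ℕ,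
      (fun h => α₁ h - ∑ k ∈ Finset.range (N + 1), κ₁ k * h ^ k)
        =O[𝓝[>] (0:ℝ)] (fun h => h ^ (N + 1)))
    (h5 : ∀ N : ℕ,
      (fun h => α₂ h - ∑ k ∈ Finset.range (N + 1), κ₂ k * h ^ k)
        =O[𝓝[>] (0:ℝ)] (fun h => h ^ (N + 1))) :
    ∀ N : ℕ,
      (fun h => ((α₁ h + α₂ h) - Real.sqrt ((α₂ h - α₁ h) ^ 2 + 4 * ε h ^ 2)) / 2
          - ∑ k ∈ Finset.range (N + 1), κ₁ k * h ^ k)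
        =O[𝓝[>] (0:ℝ)] (fun h => h ^ (N + 1)) ∧
      (fun h => ((α₁ h + α₂ h) + Real.sqrt ((α₂ h - α₁ h) ^ 2 + 4 * ε h ^ 2)) / 2
          - ∑ k ∈ Finset.range (N + 1), κ₂ k * h ^ k)
        =O[𝓝[>] (0:ℝ)] (fun h => h ^ (N + 1)) :=
  stmt10_general h₀ hh₀ α₁ α₂ ε h1 h2 κ₁ κ₂ h4 h5
end
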